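/- Let λ = -1 and A = -id + E on ℓ². Then the system ẏ = Ay is globally asymptotically stable: for every y₀ ∈ ℓ², ‖e^{tA} y₀‖₂ = e^{-t}‖e^{tE} y₀‖₂ → 0 as t → +∞. -/

import Mathlib

/-!
Since `-id` is central, `e^{tA} = e^{-t} e^{tE}`; together with `‖E‖ ≤ 1` this gives
`‖e^{tA}‖ ≤ e^{-t} e^{t‖E‖} ≤ 1` for `t ≥ 0`. A vector `v` with `E^k v = 0` (e.g. a finitely
supported sequence) has `e^{tA} v = e^{-t} ∑_{n<k} tⁿ/n! Eⁿ v → 0`. Such vectors are dense in `ℓ²`,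
and a family of operators that is eventually uniformly bounded and tends to `0` on a dense set
tends to `0` pointwise everywhere.
-/

open scoped ENNReal
open MeasureTheory Filter

noncomputable section

/-- The real Hilbert space `ℓ²` of square-summable real sequences. -/
abbrev ell2 : Type := lp (fun _ : ℕ => ℝ) 2

lemma shift_memℓp (y : ell2) : Memℓp (fun n => y (n + 1)) 2 := by
  have h : Summable fun n : ℕ => ‖y n‖ ^ (2 : ℝ≥0∞).toReal :=
    (memℓp_gen_iff (by norm_num)).mp (lp.memℓp y)
  exact memℓp_gen (h.comp_injective (add_left_injective 1))

/-- The left shift operator `E : ℓ² → ℓ²`, `(Ey)ₙ = yₙ₊₁`. -/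
def shiftE : ell2 →L[ℝ] ell2 :=
  LinearMap.mkContinuous
    { toFun := fun y => ⟨fun n => y (n + 1), shift_memℓp y⟩
      map_add' := fun y z => by
        ext n
        simp [lp.coeFn_add]; rfl
      map_smul' := fun c y => by
        ext n
        simp [lp.coeFn_smul] }
    1
    (fun y => by
      rw [one_mul]
      have h2 : (0:ℝ) < (2 : ℝ≥0∞).toReal := by norm_num
      have hy := lp.norm_rpow_eq_tsum h2 y
      have hEy := lp.norm_rpow_eq_tsum h2 (⟨fun n => y (n + 1), shift_memℓp y⟩ : ell2)
      have hle : (∑' n : ℕ, ‖y (n + 1)‖ ^ (2 : ℝ≥0∞).toReal)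
          ≤ ∑' n : ℕ, ‖y n‖ ^ (2 : ℝ≥0∞).toReal := by
        have hs : Summable fun n : ℕ => ‖y n‖ ^ (2 : ℝ≥0∞).toReal :=
          (memℓp_gen_iff h2).mp (lp.memℓp y)
        exact tsum_comp_le_tsum_of_inj hs (fun n => by positivity)
          (add_left_injective 1)
      have key : ‖(⟨fun n => y (n + 1), shift_memℓp y⟩ : ell2)‖ ^ (2 : ℝ≥0∞).toReal
          ≤ ‖y‖ ^ (2 : ℝ≥0∞).toReal := by
        rw [hy, hEy]; exact hle
      exact (Real.rpow_le_rpow_iff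
        (norm_nonneg ((⟨fun n => y (n + 1), shift_memℓp y⟩ : ell2))) (norm_nonneg y) h2).mp key)

/-- The operator `A = λ·id + E` on `ℓ²`. -/
def opA (lam : ℝ) : ell2 →L[ℝ] ell2 :=
  lam • ContinuousLinearMap.id ℝ ell2 + shiftE

open Topology
open scoped Nat

namespace ContinuousLinearMap

section Exp

variable {𝕜 E : Type*} [RCLike 𝕜] [NormedAddCommGroup E] [NormedSpace 𝕜 E] [CompleteSpace E]

theorem norm_exp_le (T : E →L[𝕜] E) : ‖NormedSpace.exp T‖ ≤ Real.exp ‖T‖ := by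
  have hT : HasSum (fun n : ℕ => ‖T‖ ^ n / n !) (Real.exp ‖T‖) := by
    rw [Real.exp_eq_exp_ℝ]
    exact NormedSpace.expSeries_div_hasSum_exp ‖T‖
  refine (NormedSpace.exp_series_hasSum_exp' (𝕂 := 𝕜) T).norm_le_of_bounded hT fun n => ?_
  have hpow : ‖T ^ n‖ ≤ ‖T‖ ^ n := by
    rcases n.eq_zero_or_pos with rfl | hn
    · rw [pow_zero, pow_zero]
      exact norm_id_le
    · exact norm_pow_le' T hn
  rw [norm_smul, norm_inv, RCLike.norm_natCast, div_eq_inv_mul]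
  gcongr

theorem exp_smul_apply_eq_sum_of_pow_apply_eq_zero {T : E →L[𝕜] E} {v : E} {k : ℕ}
    (hk : (T ^ k) v = 0) (t : 𝕜) :
    NormedSpace.exp (t • T) v = ∑ n ∈ Finset.range k, (t ^ n / n ! : 𝕜) • (T ^ n) v := by
  have hs : HasSum (fun n : ℕ => (t ^ n / n ! : 𝕜) • (T ^ n) v) (NormedSpace.exp (t • T) v) := by
    simpa only [apply_apply, smul_apply, smul_pow, smul_smul, inv_mul_eq_div] using
      (NormedSpace.exp_series_hasSum_exp' (𝕂 := 𝕜) (t • T)).mapL (apply 𝕜 E v)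
  refine hs.unique (hasSum_sum_of_ne_finset_zero fun n hn => ?_)
  obtain ⟨j, rfl⟩ := Nat.exists_eq_add_of_le' (not_lt.mp (Finset.mem_range.not.mp hn))
  rw [pow_add T, mul_apply_eq_comp, hk, map_zero, smul_zero]

end Exp

section RealExp

variable {E : Type*} [NormedAddCommGroup E] [NormedSpace ℝ E] [CompleteSpace E]

theorem norm_exp_neg_smul_exp_smul_le_one {T : E →L[ℝ] E} (hT : ‖T‖ ≤ 1) {t : ℝ} (ht : 0 ≤ t) :
    ‖Real.exp (-t) • NormedSpace.exp (t • T)‖ ≤ 1 :=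
  calc ‖Real.exp (-t) • NormedSpace.exp (t • T)‖
      ≤ Real.exp (-t) * Real.exp ‖t • T‖ := by
        rw [norm_smul, Real.norm_of_nonneg (Real.exp_pos _).le]
        gcongr
        exact norm_exp_le _
    _ ≤ Real.exp (-t) * Real.exp t := by
        gcongr
        rw [norm_smul, Real.norm_of_nonneg ht]
        exact mul_le_of_le_one_right ht hT
    _ = 1 := by rw [← Real.exp_add, neg_add_cancel, Real.exp_zero]

theorem tendsto_exp_neg_smul_exp_smul_apply_of_pow_apply_eq_zero {T : E →L[ℝ] E} {v : E} {k : ℕ}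
    (hk : (T ^ k) v = 0) :
    Tendsto (fun t : ℝ => Real.exp (-t) • NormedSpace.exp (t • T) v) atTop (𝓝 0) := by
  have hcoeff (n : ℕ) : Tendsto (fun t : ℝ => Real.exp (-t) * (t ^ n / n !)) atTop (𝓝 0) := by
    have h := (Real.tendsto_pow_mul_exp_neg_atTop_nhds_zero n).div_const (n ! : ℝ)
    rw [zero_div] at h
    exact h.congr fun t => by ring
  simp_rw [exp_smul_apply_eq_sum_of_pow_apply_eq_zero hk, Finset.smul_sum, smul_smul]
  simpa using tendsto_finsetSum (Finset.range k) fun n _ => (hcoeff n).smul_const ((T ^ n) v)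

end RealExp

theorem tendsto_apply_of_dense {ι 𝕜 E F : Type*} [NontriviallyNormedField 𝕜]
    [SeminormedAddCommGroup E] [SeminormedAddCommGroup F] [NormedSpace 𝕜 E] [NormedSpace 𝕜 F]
    {l : Filter ι} {T : ι → E →L[𝕜] F} {C : ℝ} (hT : ∀ᶠ i in l, ‖T i‖ ≤ C) {s : Set E}
    (hs : Dense s) (h : ∀ y ∈ s, Tendsto (fun i => T i y) l (𝓝 0)) (x : E) :
    Tendsto (fun i => T i x) l (𝓝 0) := by
  rw [NormedAddGroup.tendsto_nhds_zero]
  intro ε hε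
  set M := max C 1
  have hM : 0 < M := lt_max_of_lt_right one_pos
  obtain ⟨y, hxy, hy⟩ := Metric.dense_iff.mp hs x (ε / 2 / M) (by positivity)
  rw [Metric.mem_ball, dist_eq_norm'] at hxy
  filter_upwards [hT, NormedAddGroup.tendsto_nhds_zero.mp (h y hy) (ε / 2) (by positivity)]
    with i hTi hTy
  calc ‖T i x‖ = ‖T i (x - y) + T i y‖ := by rw [← map_add, sub_add_cancel]
    _ ≤ M * ‖x - y‖ + ‖T i y‖ :=
        norm_add_le_of_le ((T i).le_of_opNorm_le (hTi.trans (le_max_left C 1)) _) le_rfl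
    _ < M * (ε / 2 / M) + ε / 2 := by gcongr
    _ = ε := by field_simp; ring

end ContinuousLinearMap

theorem NormedSpace.exp_algebraMap_add {𝔸 : Type*} [NormedRing 𝔸] [NormedAlgebra ℝ 𝔸]
    [CompleteSpace 𝔸] (c : ℝ) (x : 𝔸) :
    NormedSpace.exp (algebraMap ℝ 𝔸 c + x) = Real.exp c • NormedSpace.exp x := by
  have hball (y : 𝔸) : y ∈ Metric.eball 0 (NormedSpace.expSeries ℝ 𝔸).radius :=
    (NormedSpace.expSeries_radius_eq_top ℝ 𝔸).symm ▸ edist_lt_top _ _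
  rw [NormedSpace.exp_add_of_commute_of_mem_ball (Algebra.commutes c x) (hball _) (hball _),
    ← NormedSpace.algebraMap_exp_comm, ← Algebra.smul_def, Real.exp_eq_exp_ℝ]

theorem norm_shiftE_le : ‖shiftE‖ ≤ 1 :=
  LinearMap.mkContinuous_norm_le _ zero_le_one _

theorem pow_shiftE_apply (k : ℕ) (y : ell2) (n : ℕ) : (shiftE ^ k) y n = y (n + k) := by
  induction k generalizing y with
  | zero => rfl
  | succ k ih => rw [pow_succ, mul_apply_eq_comp, ih]; rfl

theorem dense_setOf_exists_pow_shiftE_apply_eq_zero :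
    Dense {v : ell2 | ∃ k, (shiftE ^ k) v = 0} := by
  intro y
  refine mem_closure_of_tendsto (lp.hasSum_single ENNReal.ofNat_ne_top y).tendsto_sum_nat
    (Eventually.of_forall fun N => ⟨N, ?_⟩)
  ext n
  rw [pow_shiftE_apply, lp.coeFn_sum, Finset.sum_apply]
  refine Finset.sum_eq_zero fun i hi => lp.single_apply_ne 2 i _ ?_
  have := Finset.mem_range.mp hi
  omega

theorem exp_smul_opA (lam t : ℝ) :
    NormedSpace.exp (t • opA lam) = Real.exp (lam * t) • NormedSpace.exp (t • shiftE) := by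
  rw [← NormedSpace.exp_algebraMap_add, opA, smul_add, smul_smul, Algebra.algebraMap_eq_smul_one,
    mul_comm]
  rfl

/-- For `λ = -1`, `A = -id + E`, the system `ẏ = Ay` is globally asymptotically stable:
for every `y₀ ∈ ℓ²`, `‖e^{tA} y₀‖₂ = e^{-t} ‖e^{tE} y₀‖₂ → 0` as `t → +∞`. -/
theorem stmt4 (y0 : ell2) :
    (∀ t : ℝ, ‖NormedSpace.exp (t • opA (-1)) y0‖ =
      Real.exp (-t) * ‖NormedSpace.exp (t • shiftE) y0‖) ∧
    Tendsto (fun t : ℝ => NormedSpace.exp (t • opA (-1)) y0) atTop (nhds 0) := by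
  have hexp (t : ℝ) :
      NormedSpace.exp (t • opA (-1)) = Real.exp (-t) • NormedSpace.exp (t • shiftE) := by
    rw [exp_smul_opA, neg_one_mul]
  refine ⟨fun t => by
    rw [hexp, smul_apply, norm_smul, Real.norm_of_nonneg (Real.exp_pos _).le], ?_⟩
  have hcontraction : ∀ᶠ t : ℝ in atTop, ‖NormedSpace.exp (t • opA (-1))‖ ≤ 1 := by
    filter_upwards [eventually_ge_atTop (0 : ℝ)] with t ht
    rw [hexp]
    exact ContinuousLinearMap.norm_exp_neg_smul_exp_smul_le_one norm_shiftE_le ht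
  refine ContinuousLinearMap.tendsto_apply_of_dense hcontraction
    dense_setOf_exists_pow_shiftE_apply_eq_zero (fun v ⟨k, hk⟩ => ?_) y0
  simpa only [hexp, smul_apply] using
    ContinuousLinearMap.tendsto_exp_neg_smul_exp_smul_apply_of_pow_apply_eq_zero hk

end
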